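/- Let A = (a_{ij}) be an n×n multiparameter quantum matrix over R with the (p,λ)-condition, and let x_1,…,x_n ∈ R satisfy the q-exterior relations, with every a_{ij} commuting with every x_k. Set δ_i = Σ_{j=1}^n a_{ij} x_j. Then δ_i² = 0 for all i, and δ_j δ_i = −q_{ij} δ_i δ_j for all i < j; consequently, for every permutation σ of {1,…,n}, δ_{σ(1)} δ_{σ(2)} ⋯ δ_{σ(n)} = (−q)_σ · δ_1 δ_2 ⋯ δ_n. -/

import Mathlib

/-!
Expanding, `δ_u δ_v = Σ_{k,l} a_{uk} a_{vl} x_k x_l`. The `q`-exterior relations kill the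
diagonal terms and turn `x_l x_k` into `-q_{kl} x_k x_l`, so such a sum vanishes as soon as
its coefficients satisfy `b_{kl} = q_{kl} b_{lk}` for `k < l`. For `δ_i²` this is the row
relation of `A`; for `δ_j δ_i + q_{ij} δ_i δ_j` it is the third defining relation of `A`
multiplied by `q_{ij}`.

The permutation formula holds for any family with these commutation rules: sorting
`δ_{σ(1)} ⋯ δ_{σ(n)}` by adjacent transpositions, each removed inversion `(k, k+1)`
contributes the factor `-q_{σ(k+1) σ(k)}` of `(-q)_σ`.
-/

open Finset

noncomputable section

attribute [local instance] Classical.propDecidable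

/-- Ordered product `f 0 * f 1 * ... * f (n-1)` of noncommuting elements. -/
def ordProd {R : Type*} [Monoid R] {n : ℕ} (f : Fin n → R) : R :=
  (List.ofFn f).prod

/-- The generalized sign `(−q)_σ` with column labels `cols`:
`(−1)^{ℓ(σ)} ∏_{k<k', σ(k)>σ(k')} q_{cols(σ(k')) cols(σ(k))}`. -/
def qSign {N t : ℕ} (q : Fin N → Fin N → ℂ) (cols : Fin t → Fin N)
    (σ : Equiv.Perm (Fin t)) : ℂ :=
  ∏ ij ∈ Finset.univ.filter
      (fun ij : Fin t × Fin t => ij.1 < ij.2 ∧ σ ij.2 < σ ij.1),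
    (-(q (cols (σ ij.2)) (cols (σ ij.1))))

/-- The quantum minor `det_q(A^{rows}_{cols})`. -/
def qMinor {R : Type*} [Ring R] [Algebra ℂ R] {N t : ℕ}
    (q : Fin N → Fin N → ℂ) (rows cols : Fin t → Fin N)
    (a : Fin N → Fin N → R) : R :=
  ∑ σ : Equiv.Perm (Fin t),
    qSign q cols σ • ordProd (fun k => a (rows k) (cols (σ k)))

/-- Quantum row determinant `rdet(A) = Σ_σ (−q)_σ a_{1σ(1)} ⋯ a_{nσ(n)}`. -/
def rdet {R : Type*} [Ring R] [Algebra ℂ R] {N : ℕ}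
    (q : Fin N → Fin N → ℂ) (a : Fin N → Fin N → R) : R :=
  ∑ σ : Equiv.Perm (Fin N),
    qSign q id σ • ordProd (fun i => a i (σ i))

/-- Quantum column determinant `cdet(A) = Σ_σ (−p)_σ a_{σ(1)1} ⋯ a_{σ(n)n}`. -/
def cdet {R : Type*} [Ring R] [Algebra ℂ R] {N : ℕ}
    (p : Fin N → Fin N → ℂ) (a : Fin N → Fin N → R) : R :=
  ∑ σ : Equiv.Perm (Fin N),
    qSign p id σ • ordProd (fun i => a (σ i) i)

/-- Conditions on the parameters: they are nonzero, `p_{ii} = q_{ii} = 1`,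
and `p_{ij}p_{ji} = q_{ij}q_{ji} = 1`. -/
def ParamConds {N : ℕ} (p q : Fin N → Fin N → ℂ) : Prop :=
  (∀ i j, p i j ≠ 0 ∧ q i j ≠ 0) ∧
  (∀ i, p i i = 1 ∧ q i i = 1) ∧
  (∀ i j, p i j * p j i = 1 ∧ q i j * q j i = 1)

/-- The `(p,λ)`-condition: `p_{ij} q_{ij} = λ` for `i < j`. -/
def PLambdaCond {N : ℕ} (p q : Fin N → Fin N → ℂ) (lam : ℂ) : Prop :=
  ∀ i j : Fin N, i < j → p i j * q i j = lam

/-- `A = (a_{ij})` is a multiparameter quantum matrix for the parameters `p, q`. -/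
def IsQuantumMatrix {R : Type*} [Ring R] [Algebra ℂ R] {N : ℕ}
    (p q : Fin N → Fin N → ℂ) (a : Fin N → Fin N → R) : Prop :=
  (∀ i k l : Fin N, k < l → a i k * a i l = q k l • (a i l * a i k)) ∧
  (∀ i j k : Fin N, i < j → a i k * a j k = p i j • (a j k * a i k)) ∧
  (∀ i j k l : Fin N, i < j → k < l →
    a i k * a j l - (q k l / q i j) • (a j l * a i k)
      = q k l • (a i l * a j k) - (q i j)⁻¹ • (a j k * a i l)) ∧
  (∀ i j k l : Fin N, i < j → k < l →
    a i k * a j l - (p i j / p k l) • (a j l * a i k)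
      = p i j • (a j k * a i l) - (p k l)⁻¹ • (a i l * a j k))

/-- `x_1, …, x_n` satisfy the `q`-exterior relations. -/
def QExterior {R : Type*} [Ring R] [Algebra ℂ R] {N : ℕ}
    (q : Fin N → Fin N → ℂ) (x : Fin N → R) : Prop :=
  (∀ i, x i * x i = 0) ∧
  (∀ i j : Fin N, i < j → x j * x i = -(q i j) • (x i * x j))

/-- The quantum integer `[k]_λ = 1 + λ + ⋯ + λ^{k−1}`. -/
def qNum (lam : ℂ) (k : ℕ) : ℂ := ∑ i ∈ Finset.range k, lam ^ i

/-- The quantum factorial `[n]_λ! = [1]_λ [2]_λ ⋯ [n]_λ`. -/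
def qFact (lam : ℂ) (n : ℕ) : ℂ := ∏ k ∈ Finset.range n, qNum lam (k + 1)

/-- The index `2i−1` (1-based), i.e. position `2i` (0-based), inside `Fin (2n)`. -/
def pfIdx1 {n : ℕ} (i : Fin n) : Fin (2 * n) :=
  ⟨2 * i.1, by have := i.isLt; omega⟩

/-- The index `2i` (1-based), i.e. position `2i+1` (0-based), inside `Fin (2n)`. -/
def pfIdx2 {n : ℕ} (i : Fin n) : Fin (2 * n) :=
  ⟨2 * i.1 + 1, by have := i.isLt; omega⟩

/-- The multiparameter quantum Pfaffian
`Pf_q(B) = Σ_σ (−q)_σ b_{σ(1)σ(2)} ⋯ b_{σ(2n−1)σ(2n)}`, the sum over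
permutations `σ` of `{1,…,2n}` with `σ(2i−1) < σ(2i)` for all `i`. -/
def Pf {R : Type*} [Ring R] [Algebra ℂ R] {n : ℕ}
    (q : Fin (2 * n) → Fin (2 * n) → ℂ) (b : Fin (2 * n) → Fin (2 * n) → R) : R :=
  ∑ σ ∈ Finset.univ.filter
      (fun σ : Equiv.Perm (Fin (2 * n)) => ∀ i : Fin n, σ (pfIdx1 i) < σ (pfIdx2 i)),
    qSign q id σ • ordProd (fun i : Fin n => b (σ (pfIdx1 i)) (σ (pfIdx2 i)))

/-- Sub-Pfaffian along an index map `f` (typically the increasing enumeration of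
a subset of the indices): the parameters and the entries are restricted along `f`. -/
def PfOn {R : Type*} [Ring R] [Algebra ℂ R] {N m : ℕ}
    (q : Fin N → Fin N → ℂ) (b : Fin N → Fin N → R) (f : Fin (2 * m) → Fin N) : R :=
  Pf (fun i j => q (f i) (f j)) (fun i j => b (f i) (f j))

/-- `inv(I, J) = ∏_{i ∈ I, j ∈ J, i > j} (−q_{ji})`. -/
def invQ {N : ℕ} (q : Fin N → Fin N → ℂ) (I J : Finset (Fin N)) : ℂ :=
  ∏ i ∈ I, ∏ j ∈ J, if j < i then -(q j i) else 1

/-- The position `k·m + r` within `Fin (m·n)`, i.e. the `r`-th index of the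
`k`-th block of size `m`. -/
def blockIdx {m n : ℕ} (k : Fin n) (r : Fin m) : Fin (m * n) :=
  ⟨k.1 * m + r.1, by
    have hk : k.1 + 1 ≤ n := k.isLt
    have hr : r.1 < m := r.isLt
    calc k.1 * m + r.1 < k.1 * m + m := Nat.add_lt_add_left hr _
      _ = (k.1 + 1) * m := (Nat.succ_mul k.1 m).symm
      _ ≤ n * m := Nat.mul_le_mul hk (le_refl m)
      _ = m * n := Nat.mul_comm n m⟩

/-- The multiparameter quantum hyper-Pfaffian
`Pf_q(B) = Σ_{σ∈Π} (−q)_σ b_{σ(1)…σ(m)} ⋯ b_{σ(m(n−1)+1)…σ(mn)}`, where `Π` is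
the set of permutations of `{1,…,mn}` increasing on each consecutive block of
length `m`. -/
def hPf {R : Type*} [Ring R] [Algebra ℂ R] {m n : ℕ}
    (q : Fin (m * n) → Fin (m * n) → ℂ) (b : (Fin m → Fin (m * n)) → R) : R :=
  ∑ σ ∈ Finset.univ.filter
      (fun σ : Equiv.Perm (Fin (m * n)) =>
        ∀ k : Fin n, StrictMono (fun r : Fin m => σ (blockIdx k r))),
    qSign q id σ • ordProd (fun k : Fin n => b (fun r => σ (blockIdx k r)))

/-- The increasing enumeration of `{1,…,n} \ {k}` (the "hat" of `k`). -/
def hatIdx {n : ℕ} (k : Fin n) (r : Fin (n - 1)) : Fin n :=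
  if h : r.1 < k.1 then ⟨r.1, by have := k.isLt; omega⟩
  else ⟨r.1 + 1, by have := r.isLt; omega⟩

/-- The increasing enumeration of `{s+1,…,n}`. -/
def tailIdx {n : ℕ} (s : ℕ) (k : Fin (n - s)) : Fin n :=
  ⟨s + k.1, by have := k.isLt; omega⟩

/-- The increasing enumeration of `{1,…,t}` inside `{1,…,n}`. -/
def headIdx {n : ℕ} (t : ℕ) (ht : t ≤ n) (k : Fin t) : Fin n :=
  ⟨k.1, lt_of_lt_of_le k.isLt ht⟩

/-- `σ` is a `t`-shuffle: `σ(1) < ⋯ < σ(t)` and `σ(t+1) < ⋯ < σ(n)`. -/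
def IsShuffle {n : ℕ} (t : ℕ) (σ : Equiv.Perm (Fin n)) : Prop :=
  (∀ k l : Fin n, k < l → l.1 < t → σ k < σ l) ∧
  (∀ k l : Fin n, k < l → t ≤ k.1 → σ k < σ l)

theorem Finset.sum_sum_eq_zero_of_antisymm {ι M : Type*} [Fintype ι] [LinearOrder ι]
    [AddCommMonoid M] (F : ι → ι → M) (hdiag : ∀ i, F i i = 0)
    (hanti : ∀ i j, i < j → F i j + F j i = 0) :
    ∑ i, ∑ j, F i j = 0 := by
  rw [← Finset.sum_product']
  refine Finset.sum_ninvolution Prod.swap (fun ij => ?_) (fun ij hF hfix => hF ?_)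
    (by simp) (by simp)
  · rcases lt_trichotomy ij.1 ij.2 with h | h | h
    · exact hanti _ _ h
    · simp [Prod.swap, h, hdiag]
    · rw [add_comm]; exact hanti _ _ h
  · rw [← Prod.snd_swap (p := ij), hfix]
    exact hdiag ij.2

lemma sum_mul_sum_eq_sum_sum_of_commute {ι R : Type*} [Fintype ι] [Semiring R]
    (a b x : ι → R) (hbx : ∀ k l, Commute (b l) (x k)) :
    (∑ k, a k * x k) * (∑ l, b l * x l) = ∑ k, ∑ l, a k * b l * (x k * x l) := by
  rw [Finset.sum_mul_sum]
  exact Finset.sum_congr rfl fun k _ => Finset.sum_congr rfl fun l _ =>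
    (hbx k l).symm.mul_mul_mul_comm _ _

def inversions {N : ℕ} (σ : Equiv.Perm (Fin N)) : Finset (Fin N × Fin N) :=
  Finset.univ.filter (fun ij : Fin N × Fin N => ij.1 < ij.2 ∧ σ ij.2 < σ ij.1)

@[simp]
lemma mem_inversions {N : ℕ} {σ : Equiv.Perm (Fin N)} {ij : Fin N × Fin N} :
    ij ∈ inversions σ ↔ ij.1 < ij.2 ∧ σ ij.2 < σ ij.1 := by
  simp [inversions]

lemma qSign_eq_prod_inversions {N t : ℕ} (q : Fin N → Fin N → ℂ) (cols : Fin t → Fin N)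
    (σ : Equiv.Perm (Fin t)) :
    qSign q cols σ = ∏ ij ∈ inversions σ, -(q (cols (σ ij.2)) (cols (σ ij.1))) :=
  rfl

lemma inversions_one {N : ℕ} : inversions (1 : Equiv.Perm (Fin N)) = ∅ := by
  simp only [inversions, Equiv.Perm.one_apply]
  exact Finset.filter_false_of_mem fun ij _ h => lt_asymm h.1 h.2

lemma qSign_one {N t : ℕ} (q : Fin N → Fin N → ℂ) (cols : Fin t → Fin N) :
    qSign q cols 1 = 1 := by
  rw [qSign_eq_prod_inversions, inversions_one, Finset.prod_empty]

section AdjacentSwap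

variable {n : ℕ} (i : Fin n) {σ : Equiv.Perm (Fin (n + 1))}

lemma swap_castSucc_succ_lt_iff {a b : Fin (n + 1)} :
    Equiv.swap i.castSucc i.succ a < Equiv.swap i.castSucc i.succ b ↔
      (a < b ∧ (a, b) ≠ (i.castSucc, i.succ)) ∨ (a, b) = (i.succ, i.castSucc) := by
  simp only [Equiv.swap_apply_def, ne_eq, Prod.mk.injEq]
  split_ifs <;> simp only [Fin.lt_def, Fin.ext_iff, Fin.val_castSucc, Fin.val_succ] at * <;> omega

lemma castSucc_succ_mem_inversions (h : σ i.succ < σ i.castSucc) :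
    (i.castSucc, i.succ) ∈ inversions σ :=
  mem_inversions.2 ⟨Fin.castSucc_lt_succ, h⟩

lemma inversions_erase_eq_map_inversions_mul_swap (h : σ i.succ < σ i.castSucc) :
    (inversions σ).erase (i.castSucc, i.succ) =
      (inversions (σ * Equiv.swap i.castSucc i.succ)).map
        (Equiv.prodCongr (Equiv.swap i.castSucc i.succ)
          (Equiv.swap i.castSucc i.succ)).toEmbedding := by
  ext ⟨a, b⟩
  simp only [Finset.mem_map_equiv, Finset.mem_erase, mem_inversions, Equiv.prodCongr_symm,
    Equiv.prodCongr_apply, Prod.map, Equiv.symm_swap, Equiv.Perm.mul_apply,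
    Equiv.swap_apply_self, swap_castSucc_succ_lt_iff]
  constructor
  · rintro ⟨hne, hab, hσ⟩
    exact ⟨Or.inl ⟨hab, hne⟩, hσ⟩
  · rintro ⟨(⟨hab, hne⟩ | heq), hσ⟩
    · exact ⟨hne, hab, hσ⟩
    · simp only [Prod.mk.injEq] at heq
      rw [heq.1, heq.2] at hσ
      exact absurd h (lt_asymm hσ)

lemma card_inversions_mul_swap_lt (h : σ i.succ < σ i.castSucc) :
    (inversions (σ * Equiv.swap i.castSucc i.succ)).card < (inversions σ).card := by
  rw [← Finset.card_map, ← inversions_erase_eq_map_inversions_mul_swap i h]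
  exact Finset.card_erase_lt_of_mem (castSucc_succ_mem_inversions i h)

lemma qSign_eq_mul_qSign_mul_swap (q : Fin (n + 1) → Fin (n + 1) → ℂ)
    (h : σ i.succ < σ i.castSucc) :
    qSign q id σ =
      -(q (σ i.succ) (σ i.castSucc)) * qSign q id (σ * Equiv.swap i.castSucc i.succ) := by
  rw [qSign_eq_prod_inversions, ← Finset.mul_prod_erase _ _ (castSucc_succ_mem_inversions i h),
    inversions_erase_eq_map_inversions_mul_swap i h, Finset.prod_map,
    qSign_eq_prod_inversions]
  rfl

end AdjacentSwap

lemma ordProd_succ {M : Type*} [Monoid M] {N : ℕ} (f : Fin (N + 1) → M) :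
    ordProd f = f 0 * ordProd (fun i => f i.succ) := by
  simp [ordProd, List.ofFn_succ]

lemma ordProd_eq_smul_of_eqOn_adjacent {K R : Type*} [CommSemiring K] [Semiring R]
    [Algebra K R] {n : ℕ} (i : Fin n) (f g : Fin (n + 1) → R) (c : K)
    (hfg : ∀ k, k ≠ i.castSucc → k ≠ i.succ → f k = g k)
    (hi : f i.castSucc * f i.succ = c • (g i.castSucc * g i.succ)) :
    ordProd f = c • ordProd g := by
  induction n with
  | zero => exact i.elim0
  | succ m ih =>
    rw [ordProd_succ f, ordProd_succ g]
    induction i using Fin.cases with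
    | zero =>
      have htail : ∀ k : Fin m, f k.succ.succ = g k.succ.succ := fun k =>
        hfg _ (by simp [Fin.ext_iff]) (by simp [Fin.ext_iff])
      rw [ordProd_succ (fun k => f k.succ), ordProd_succ (fun k => g k.succ), ← mul_assoc,
        ← mul_assoc]
      simp only [htail]
      rw [Fin.castSucc_zero] at hi
      rw [hi, smul_mul_assoc]
    | succ j =>
      have h0 : f 0 = g 0 := hfg 0 (by simp [Fin.ext_iff]) (by simp [Fin.ext_iff])
      rw [h0, ih j _ _ (fun k hk₁ hk₂ => hfg k.succ ?_ ?_) hi, mul_smul_comm]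
      · simpa [Fin.ext_iff] using hk₁
      · simpa [Fin.ext_iff] using hk₂

theorem ordProd_comp_perm {R : Type*} [Semiring R] [Algebra ℂ R] {N : ℕ}
    (q : Fin N → Fin N → ℂ) (y : Fin N → R)
    (hy : ∀ i j, i < j → y j * y i = -(q i j) • (y i * y j)) (σ : Equiv.Perm (Fin N)) :
    ordProd (fun k => y (σ k)) = qSign q id σ • ordProd y := by
  cases N with
  | zero => rw [Subsingleton.elim σ 1, qSign_one, one_smul]; rfl
  | succ n =>
    induction hm : (inversions σ).card using Nat.strong_induction_on generalizing σ with
    | _ m ih =>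
    by_cases hdesc : ∃ i : Fin n, σ i.succ < σ i.castSucc
    · obtain ⟨i, hi⟩ := hdesc
      set τ := σ * Equiv.swap i.castSucc i.succ
      have hτ : ordProd (fun k => y (σ k)) =
          -(q (σ i.succ) (σ i.castSucc)) • ordProd (fun k => y (τ k)) := by
        refine ordProd_eq_smul_of_eqOn_adjacent i _ _ _ (fun k hk₁ hk₂ => ?_) ?_
        · simp [τ, Equiv.swap_apply_of_ne_of_ne hk₁ hk₂]
        · simpa [τ] using hy _ _ hi
      rw [hτ, ih _ (hm ▸ card_inversions_mul_swap_lt i hi) τ rfl, smul_smul,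
        ← qSign_eq_mul_qSign_mul_swap i q hi]
    · have hmono : StrictMono σ := Fin.strictMono_iff_lt_succ.2 fun i =>
        (not_lt.1 fun h => hdesc ⟨i, h⟩).lt_of_ne (σ.injective.ne (Fin.castSucc_lt_succ).ne)
      have hσ : σ = 1 := Equiv.ext fun k => hmono.apply_eq
      rw [hσ, qSign_one, one_smul]
      rfl

section QuantumMatrix

variable {R : Type*} [Ring R] [Algebra ℂ R] {n : ℕ}

theorem QExterior.sum_sum_eq_zero {q : Fin n → Fin n → ℂ} {x : Fin n → R}
    (hx : QExterior q x) (b : Fin n → Fin n → R) (hb : ∀ k l, k < l → b k l = q k l • b l k) :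
    ∑ k, ∑ l, b k l * (x k * x l) = 0 := by
  refine Finset.sum_sum_eq_zero_of_antisymm _ (fun k => by rw [hx.1 k, mul_zero])
    fun k l hkl => ?_
  rw [hx.2 k l hkl, hb k l hkl, smul_mul_assoc, mul_smul_comm, neg_smul, add_neg_cancel]

theorem IsQuantumMatrix.mul_add_smul_mul {p q : Fin n → Fin n → ℂ} {a : Fin n → Fin n → R}
    (ha : IsQuantumMatrix p q a) {i j k l : Fin n} (hij : i < j) (hkl : k < l)
    (hq : q i j ≠ 0) :
    a j k * a i l + q i j • (a i k * a j l) =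
      q k l • (a j l * a i k + q i j • (a i l * a j k)) := by
  have h := congrArg (q i j • ·) (ha.2.2.1 i j k l hij hkl)
  simp only [smul_sub, smul_smul, mul_div_cancel₀ _ hq, mul_inv_cancel₀ hq, one_smul] at h
  linear_combination (norm := module) h

end QuantumMatrix

theorem delta_relations_general {R : Type*} [Ring R] [Algebra ℂ R] {n : ℕ}
    (p q : Fin n → Fin n → ℂ) (hpq : ParamConds p q)
    (a : Fin n → Fin n → R) (ha : IsQuantumMatrix p q a)
    (x : Fin n → R) (hx : QExterior q x)
    (hax : ∀ i j k, Commute (a i j) (x k))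
    (δ : Fin n → R) (hδ : ∀ i, δ i = ∑ j, a i j * x j) :
    (∀ i, δ i * δ i = 0) ∧
    (∀ i j : Fin n, i < j → δ j * δ i = -(q i j) • (δ i * δ j)) ∧
    (∀ σ : Equiv.Perm (Fin n),
      ordProd (fun k => δ (σ k)) = qSign q id σ • ordProd δ) := by
  have hδδ (u v : Fin n) : δ u * δ v = ∑ k, ∑ l, a u k * a v l * (x k * x l) := by
    rw [hδ, hδ, sum_mul_sum_eq_sum_sum_of_commute _ _ _ fun k l => hax v l k]
  have hsq (i : Fin n) : δ i * δ i = 0 := by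
    rw [hδδ]
    exact hx.sum_sum_eq_zero _ fun k l hkl => ha.1 i k l hkl
  have hcomm (i j : Fin n) (hij : i < j) : δ j * δ i = -(q i j) • (δ i * δ j) := by
    have hsum : δ j * δ i + q i j • (δ i * δ j) =
        ∑ k, ∑ l, (a j k * a i l + q i j • (a i k * a j l)) * (x k * x l) := by
      simp only [hδδ, Finset.smul_sum, ← Finset.sum_add_distrib, add_mul, smul_mul_assoc]
    rw [neg_smul, eq_neg_iff_add_eq_zero, hsum]
    exact hx.sum_sum_eq_zero _ fun k l hkl => ha.mul_add_smul_mul hij hkl (hpq.1 i j).2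
  exact ⟨hsq, hcomm, ordProd_comp_perm q δ hcomm⟩

/-- The elements `δ_i = Σ_j a_{ij} x_j` satisfy the `q`-exterior
relations and consequently `δ_{σ(1)} ⋯ δ_{σ(n)} = (−q)_σ δ_1 ⋯ δ_n`. -/
theorem delta_relations {R : Type*} [Ring R] [Algebra ℂ R] {n : ℕ} (lam : ℂ)
    (p q : Fin n → Fin n → ℂ) (hpq : ParamConds p q) (hpl : PLambdaCond p q lam)
    (a : Fin n → Fin n → R) (ha : IsQuantumMatrix p q a)
    (x : Fin n → R) (hx : QExterior q x)
    (hax : ∀ i j k, Commute (a i j) (x k))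
    (δ : Fin n → R) (hδ : ∀ i, δ i = ∑ j, a i j * x j) :
    (∀ i, δ i * δ i = 0) ∧
    (∀ i j : Fin n, i < j → δ j * δ i = -(q i j) • (δ i * δ j)) ∧
    (∀ σ : Equiv.Perm (Fin n),
      ordProd (fun k => δ (σ k)) = qSign q id σ • ordProd δ) :=
  delta_relations_general p q hpq a ha x hx hax δ hδ
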